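/- arXiv:math/0611817 — 3 statements merged into one kernel-verified Lean document; each statement's English description precedes it below -/
import Mathlib

section
/- (Alexander's lemma for the closed disc.) Let K₁, K₂ be disjoint closed subsets of the closed unit disc D² ⊆ ℝ², and let x, y ∈ D² ∖ (K₁ ∪ K₂). If there is a path joining x and y in D² ∖ K₁ and a path joining x and y in D² ∖ K₂, then there is a path joining x and y in D² ∖ (K₁ ∪ K₂). -/
/-!
Eilenberg's criterion: for compact `K ⊆ ℂ` and `x, y ∉ K`, the points `x` and `y` lie in the same
component of `ℂ \ K` as soon as `(z - x) / (z - y)` has a continuous logarithm on `K`. A path from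
`x` to `y` avoiding `Kᵢ` provides such a logarithm on `Kᵢ` (homotopy lifting for `exp`), the two
logarithms glue on the disjoint closed sets `K₁` and `K₂`, and the criterion yields a path
avoiding `K₁ ∪ K₂`. To pass from the plane to the disc, pull `Kᵢ` back along a retraction of the
plane onto the disc which is constant, equal to `x`, outside a compact set.
-/

open Complex Metric Set Bornology
open scoped Real

def HasContinuousLogOn {X : Type*} [TopologicalSpace X] (f : X → ℂ) (s : Set X) : Prop :=
  ∃ g : X → ℂ, ContinuousOn g s ∧ ∀ z ∈ s, exp (g z) = f z

namespace HasContinuousLogOn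

variable {X : Type*} [TopologicalSpace X] {f f' : X → ℂ} {s t : Set X}

theorem mono (h : HasContinuousLogOn f s) (hts : t ⊆ s) : HasContinuousLogOn f t :=
  let ⟨g, hg, hfg⟩ := h
  ⟨g, hg.mono hts, fun z hz ↦ hfg z (hts hz)⟩

theorem congr (h : HasContinuousLogOn f s) (hff' : EqOn f f' s) : HasContinuousLogOn f' s :=
  let ⟨g, hg, hfg⟩ := h
  ⟨g, hg, fun z hz ↦ (hfg z hz).trans (hff' hz)⟩

theorem mul (h : HasContinuousLogOn f s) (h' : HasContinuousLogOn f' s) :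
    HasContinuousLogOn (f * f') s :=
  let ⟨g, hg, hfg⟩ := h
  let ⟨g', hg', hfg'⟩ := h'
  ⟨g + g', hg.add hg', fun z hz ↦ by simp [exp_add, hfg z hz, hfg' z hz]⟩

theorem inv (h : HasContinuousLogOn f s) : HasContinuousLogOn f⁻¹ s :=
  let ⟨g, hg, hfg⟩ := h
  ⟨-g, hg.neg, fun z hz ↦ by simp [exp_neg, hfg z hz]⟩

theorem union (h : HasContinuousLogOn f s) (h' : HasContinuousLogOn f t) (hs : IsClosed s)
    (ht : IsClosed t) (hst : Disjoint s t) : HasContinuousLogOn f (s ∪ t) := by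
  classical
  obtain ⟨g, hg, hfg⟩ := h
  obtain ⟨g', hg', hfg'⟩ := h'
  have hs_eq : EqOn (s.piecewise g g') g s := piecewise_eqOn s g g'
  have ht_eq : EqOn (s.piecewise g g') g' t :=
    (piecewise_eqOn_compl s g g').mono hst.subset_compl_left
  refine ⟨s.piecewise g g', (hg.congr hs_eq).union_of_isClosed (hg'.congr ht_eq) hs ht, ?_⟩
  rintro z (hz | hz)
  · rw [hs_eq hz, hfg z hz]
  · rw [ht_eq hz, hfg' z hz]

/-- Homotopy lifting for the covering map `exp : ℂ → ℂ \ {0}`. -/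
theorem of_homotopy {H : ℝ → X → ℂ} (hH : ContinuousOn (Function.uncurry H) (Icc 0 1 ×ˢ s))
    (hne : ∀ t ∈ Icc (0 : ℝ) 1, ∀ z ∈ s, H t z ≠ 0) (h₀ : HasContinuousLogOn (H 0) s) :
    HasContinuousLogOn (H 1) s := by
  classical
  obtain ⟨g₀, hg₀, hg₀H⟩ := h₀
  let Hs : C(unitInterval × s, {w : ℂ // w ≠ 0}) :=
    ⟨fun p ↦ ⟨H p.1 p.2, hne _ p.1.2 _ p.2.2⟩, by
      refine Continuous.subtype_mk (hH.comp_continuous (f := fun p : unitInterval × s ↦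
        ((p.1 : ℝ), (p.2 : X))) ?_ fun p ↦ ⟨p.1.2, p.2.2⟩) _
      exact continuous_subtype_val.prodMap continuous_subtype_val⟩
  let g₀s : C(s, ℂ) := ⟨s.domRestrict g₀, hg₀.domRestrict⟩
  have hHs₀ (z : s) : Hs (0, z) = ⟨exp (g₀s z), exp_ne_zero _⟩ := Subtype.ext (hg₀H z z.2).symm
  let Λ := isCoveringMap_exp.liftHomotopy Hs g₀s hHs₀
  refine ⟨fun z ↦ if hz : z ∈ s then Λ (1, ⟨z, hz⟩) else 0, ?_, fun z hz ↦ ?_⟩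
  · rw [continuousOn_iff_continuous_domRestrict]
    exact (Λ.continuous.comp (Continuous.prodMk_right 1)).congr fun z ↦ by simp [z.2]
  · have := congr_fun (isCoveringMap_exp.liftHomotopy_lifts Hs g₀s hHs₀) (1, ⟨z, hz⟩)
    simp only [dif_pos hz]
    exact congr_arg Subtype.val this

end HasContinuousLogOn

section NormedSpace

variable {E : Type*} [NormedAddCommGroup E] [NormedSpace ℝ E] {f : E → ℂ}

theorem Convex.hasContinuousLogOn {K : Set E} (hK : Convex ℝ K) (hf : ContinuousOn f K)
    (hne : ∀ z ∈ K, f z ≠ 0) : HasContinuousLogOn f K := by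
  rcases K.eq_empty_or_nonempty with rfl | ⟨c, hc⟩
  · exact ⟨0, continuousOn_empty _, by simp⟩
  have hmem : ∀ t ∈ Icc (0 : ℝ) 1, ∀ z ∈ K, c + t • (z - c) ∈ K := fun t ht z hz ↦
    hK.add_smul_sub_mem hc hz ht
  have hlog := HasContinuousLogOn.of_homotopy (H := fun t z ↦ f (c + t • (z - c))) (s := K)
    (hf.comp (by fun_prop) fun p hp ↦ hmem p.1 hp.1 p.2 hp.2)
    (fun t ht z hz ↦ hne _ (hmem t ht z hz))
    ⟨fun _ ↦ log (f c), continuousOn_const, fun z _ ↦ by simpa using exp_log (hne c hc)⟩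
  exact hlog.congr fun z _ ↦ by simp

/-- Radially deform the sphere to one on which `f` is `1`. -/
theorem hasContinuousLogOn_sphere_of_eq_one {x : E} {r R : ℝ} (hr : 0 < r)
    (hf : ContinuousOn f {x}ᶜ) (hne : ∀ z ≠ x, f z ≠ 0) (hR : ∀ z, R ≤ dist z x → f z = 1) :
    HasContinuousLogOn f (sphere x r) := by
  let a := max 1 (R / r)
  have ha : 1 ≤ a := le_max_left _ _
  let s : ℝ → ℝ := fun t ↦ (1 - t) * a + t
  have hs : ∀ t ∈ Icc (0 : ℝ) 1, 1 ≤ s t := fun t ht ↦ by nlinarith [ht.1, ht.2]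
  have hdist : ∀ t, ∀ z ∈ sphere x r, dist (x + s t • (z - x)) x = |s t| * r := by
    intro t z hz
    rw [dist_eq_norm, add_sub_cancel_left, norm_smul, Real.norm_eq_abs, ← dist_eq_norm,
      mem_sphere.mp hz]
  have hmem : ∀ t ∈ Icc (0 : ℝ) 1, ∀ z ∈ sphere x r, x + s t • (z - x) ≠ x := by
    intro t ht z hz h
    have := hdist t z hz
    rw [h, dist_self, abs_of_pos (by linarith [hs t ht])] at this
    nlinarith [hs t ht]
  have hlog := HasContinuousLogOn.of_homotopy (H := fun t z ↦ f (x + s t • (z - x)))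
    (s := sphere x r) (hf.comp (by fun_prop) fun p hp ↦ hmem p.1 hp.1 p.2 hp.2)
    (fun t ht z hz ↦ hne _ (hmem t ht z hz)) ⟨fun _ ↦ 0, continuousOn_const, fun z hz ↦ ?_⟩
  · exact hlog.congr fun z _ ↦ by simp [s]
  · show exp 0 = f (x + s 0 • (z - x))
    rw [exp_zero, hR _ ?_]
    rw [hdist 0 z hz]
    simp only [s, sub_zero, one_mul, add_zero, abs_of_pos (by linarith : (0 : ℝ) < a)]
    calc R ≤ R / r * r := by rw [div_mul_cancel₀ _ hr.ne']
      _ ≤ a * r := by gcongr; exact le_max_right _ _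

end NormedSpace

theorem not_hasContinuousLogOn_sub_sphere {c : ℂ} {r : ℝ} (hr : 0 < r) :
    ¬ HasContinuousLogOn (fun z ↦ z - c) (sphere c r) := by
  rintro ⟨g, hg, hgc⟩
  let φ : ℝ → ℂ := fun θ ↦ c + r * exp (θ * I)
  have hφ : ∀ θ, φ θ ∈ sphere c r := fun θ ↦ by
    simp [φ, norm_exp_ofReal_mul_I, abs_of_pos hr]
  -- continuous with values in the discrete group `2πiℤ`, yet it drops by `2πi` over one turn
  let ℓ : ℝ → ℂ := fun θ ↦ g (φ θ) - (Real.log r + θ * I)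
  have hℓ : Continuous ℓ := (hg.comp_continuous (by fun_prop) hφ).sub (by fun_prop)
  have hℓZ : MapsTo ℓ univ (AddSubgroup.zmultiples (2 * π * I)) := by
    intro θ _
    obtain ⟨n, hn⟩ := exp_eq_one_iff.mp (show exp (ℓ θ) = 1 by
      rw [exp_sub, hgc _ (hφ θ), exp_add, ← ofReal_exp, Real.exp_log hr]
      simp [φ, hr.ne'])
    exact AddSubgroup.mem_zmultiples_iff.mpr ⟨n, by rw [hn, zsmul_eq_mul]⟩
  have hconst := isPreconnected_univ.constant_of_mapsTo
    (isDiscrete_iff_discreteTopology.mpr (NormedSpace.discreteTopology_zmultiples _))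
    hℓ.continuousOn hℓZ (mem_univ 0) (mem_univ (2 * π))
  have hφ2π : φ (2 * π) = φ 0 := by simp [φ]
  simp only [ℓ, hφ2π] at hconst
  have := congr_arg im hconst
  simp at this
  linarith [Real.pi_pos]

theorem hasContinuousLogOn_div_sub_of_joinedIn {K : Set ℂ} {x y : ℂ} (h : JoinedIn Kᶜ x y) :
    HasContinuousLogOn (fun z ↦ (z - x) / (z - y)) K := by
  obtain ⟨γ, hγ⟩ := h.symm
  have hγK : ∀ t ∈ Icc (0 : ℝ) 1, ∀ z ∈ K, z - γ.extend t ≠ 0 := fun t ht z hz h ↦ by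
    rw [sub_eq_zero.mp h, γ.extend_apply ht] at hz
    exact hγ _ hz
  have hyK : ∀ z ∈ K, z - y ≠ 0 := by simpa using hγK 0 (left_mem_Icc.mpr zero_le_one)
  have hlog := HasContinuousLogOn.of_homotopy (H := fun t z ↦ (z - γ.extend t) / (z - y))
    (s := K) (ContinuousOn.div (by fun_prop) (by fun_prop) fun p hp ↦ hyK p.2 hp.2)
    (fun t ht z hz ↦ div_ne_zero (hγK t ht z hz) (hyK z hz))
    ⟨fun _ ↦ 0, continuousOn_const, fun z hz ↦ by simp [div_self (hyK z hz)]⟩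
  simpa using hlog

theorem IsOpen.frontier_connectedComponentIn_subset {X : Type*} [TopologicalSpace X]
    [LocallyConnectedSpace X] {U : Set X} (hU : IsOpen U) (x : X) :
    frontier (connectedComponentIn U x) ⊆ Uᶜ := by
  intro z hz hzU
  rw [hU.connectedComponentIn.frontier_eq] at hz
  obtain ⟨w, hwz, hwx⟩ := mem_closure_iff.mp hz.1 _ hU.connectedComponentIn
    (mem_connectedComponentIn hzU)
  apply hz.2
  rw [connectedComponentIn_eq hwx, ← connectedComponentIn_eq hwz]
  exact mem_connectedComponentIn hzU

/-- Eilenberg's argument: extend the logarithm `g` of `(z - x) / (z - y)` from `K` to `G` on `ℂ`.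
Then `(z - x) / (z - y) * exp (-G z)` on `closure U`, extended by `1`, is continuous and
nonvanishing off `x`, so `z - x = f z * ((z - y) * exp (G z))` would have a logarithm on a small
circle around `x`. -/
theorem not_hasContinuousLogOn_div_sub_of_frontier_subset {U K : Set ℂ} (hUb : IsBounded U)
    (hUo : IsOpen U) (hK : IsClosed K) (hfr : frontier U ⊆ K) {x y : ℂ} (hx : x ∈ U)
    (hy : y ∉ closure U) : ¬ HasContinuousLogOn (fun z ↦ (z - x) / (z - y)) K := by
  classical
  rintro ⟨g, hg, hgK⟩
  obtain ⟨G, hG⟩ := ContinuousMap.exists_restrict_eq hK ⟨K.domRestrict g, hg.domRestrict⟩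
  have hGK : ∀ z ∈ K, exp (G z) = (z - x) / (z - y) := fun z hz ↦
    (congr_arg exp (DFunLike.congr_fun hG ⟨z, hz⟩)).trans (hgK z hz)
  let f : ℂ → ℂ := (closure U).piecewise (fun z ↦ (z - x) / (z - y) * exp (-G z)) 1
  have hf : Continuous f := by
    refine continuousOn_univ.mp (ContinuousOn.piecewise (fun z hz ↦ ?_) ?_ continuousOn_const)
    · rw [← hGK z (hfr (frontier_closure_subset hz.2)), exp_neg,
        mul_inv_cancel₀ (exp_ne_zero _), Pi.one_apply]
    · rw [univ_inter, closure_closure]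
      exact ContinuousOn.mul (ContinuousOn.div (by fun_prop) (by fun_prop)
        fun z hz h ↦ hy (sub_eq_zero.mp h ▸ hz)) (by fun_prop)
  have hf_ne : ∀ z ≠ x, f z ≠ 0 := by
    intro z hzx
    by_cases hz : z ∈ closure U
    · simp only [f, piecewise_eq_of_mem _ _ _ hz]
      exact mul_ne_zero (div_ne_zero (sub_ne_zero.mpr hzx)
        (sub_ne_zero.mpr fun h ↦ hy (h ▸ hz))) (exp_ne_zero _)
    · rw [show f z = 1 from piecewise_eq_of_notMem _ _ _ hz]
      exact one_ne_zero
  obtain ⟨ε, hε, hεU⟩ := Metric.isOpen_iff.mp hUo x hx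
  have hball : closedBall x (ε / 2) ⊆ U := (closedBall_subset_ball (half_lt_self hε)).trans hεU
  obtain ⟨R, hR⟩ := hUb.closure.subset_ball x
  have hfS : HasContinuousLogOn f (sphere x (ε / 2)) :=
    hasContinuousLogOn_sphere_of_eq_one (half_pos hε) hf.continuousOn hf_ne fun z hz ↦
      piecewise_eq_of_notMem _ _ _ fun hzC ↦ (mem_ball.mp (hR hzC)).not_ge hz
  have hyS : HasContinuousLogOn (fun z ↦ z - y) (sphere x (ε / 2)) :=
    ((convex_closedBall x _).hasContinuousLogOn (by fun_prop) fun z hz h ↦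
      hy ((sub_eq_zero.mp h : z = y) ▸ subset_closure (hball hz))).mono sphere_subset_closedBall
  have hGS : HasContinuousLogOn (fun z ↦ exp (G z)) (sphere x (ε / 2)) :=
    ⟨G, G.continuous.continuousOn, fun _ _ ↦ rfl⟩
  refine not_hasContinuousLogOn_sub_sphere (half_pos hε)
    ((hfS.mul (hyS.mul hGS)).congr fun z hz ↦ ?_)
  have hzC : z ∈ closure U := subset_closure (hball (sphere_subset_closedBall hz))
  have hzy : z - y ≠ 0 := sub_ne_zero.mpr fun h ↦ hy (h ▸ hzC)
  simp only [Pi.mul_apply, f, piecewise_eq_of_mem _ _ _ hzC, exp_neg]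
  field_simp

theorem mem_connectedComponentIn_of_hasContinuousLogOn {K : Set ℂ} (hK : IsClosed K) {x y : ℂ}
    (hx : x ∉ K) (hy : y ∉ K) (hC : IsBounded (connectedComponentIn Kᶜ x))
    (hlog : HasContinuousLogOn (fun z ↦ (z - x) / (z - y)) K) :
    y ∈ connectedComponentIn Kᶜ x := by
  by_contra hyC
  have hfr : frontier (connectedComponentIn Kᶜ x) ⊆ K := fun z hz ↦
    not_not.mp (hK.isOpen_compl.frontier_connectedComponentIn_subset x hz)
  refine not_hasContinuousLogOn_div_sub_of_frontier_subset hC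
    hK.isOpen_compl.connectedComponentIn hK hfr (mem_connectedComponentIn hx) ?_ hlog
  rw [closure_eq_self_union_frontier]
  rintro (h | h)
  exacts [hyC h, hy (hfr h)]

theorem mem_connectedComponentIn_of_not_isBounded {K : Set ℂ} (hK : IsBounded K) {x y : ℂ}
    (hy : y ∉ K) (hCx : ¬ IsBounded (connectedComponentIn Kᶜ x))
    (hCy : ¬ IsBounded (connectedComponentIn Kᶜ y)) : y ∈ connectedComponentIn Kᶜ x := by
  obtain ⟨R, hR⟩ := hK.subset_closedBall 0
  let A : Set ℂ := (fun p : ℝ × ℝ ↦ p.1 * exp (p.2 * I)) '' (Ioi R ×ˢ univ)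
  have hA : IsPreconnected A :=
    (isPreconnected_Ioi.prod isPreconnected_univ).image _ (by fun_prop : Continuous _).continuousOn
  have hAK : A ⊆ Kᶜ := by
    rintro _ ⟨p, hp, rfl⟩ hpK
    have := mem_closedBall_zero_iff.mp (hR hpK)
    rw [norm_mul, norm_exp_ofReal_mul_I, mul_one, norm_real, Real.norm_eq_abs] at this
    exact (hp.1.trans_le (le_abs_self _)).not_ge this
  have hmeet : ∀ v, ¬ IsBounded (connectedComponentIn Kᶜ v) →
      ∃ z ∈ connectedComponentIn Kᶜ v, z ∈ A := by
    intro v hv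
    obtain ⟨z, hzv, hzR⟩ := not_subset.mp fun h ↦
      hv ((isBounded_closedBall (x := (0 : ℂ)) (r := R)).subset h)
    exact ⟨z, hzv, ⟨(‖z‖, arg z), ⟨by simpa using hzR, mem_univ _⟩, norm_mul_exp_arg_mul_I z⟩⟩
  obtain ⟨z₁, hz₁x, hz₁A⟩ := hmeet x hCx
  obtain ⟨z₂, hz₂y, hz₂A⟩ := hmeet y hCy
  rw [connectedComponentIn_eq hz₁x, ← connectedComponentIn_eq
    (hA.subset_connectedComponentIn hz₂A hAK hz₁A), ← connectedComponentIn_eq hz₂y]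
  exact mem_connectedComponentIn hy

theorem joinedIn_compl_of_hasContinuousLogOn {K : Set ℂ} (hK : IsCompact K) {x y : ℂ}
    (hx : x ∉ K) (hy : y ∉ K) (hlog : HasContinuousLogOn (fun z ↦ (z - x) / (z - y)) K) :
    JoinedIn Kᶜ x y := by
  suffices hyx : y ∈ connectedComponentIn Kᶜ x by
    have hpc := hK.isClosed.isOpen_compl.connectedComponentIn.isConnected_iff_isPathConnected.mp
      (isConnected_connectedComponentIn_iff.mpr hx)
    exact (hpc.joinedIn _ (mem_connectedComponentIn hx) _ hyx).mono
      (connectedComponentIn_subset _ _)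
  by_cases hCx : IsBounded (connectedComponentIn Kᶜ x)
  · exact mem_connectedComponentIn_of_hasContinuousLogOn hK.isClosed hx hy hCx hlog
  by_cases hCy : IsBounded (connectedComponentIn Kᶜ y)
  · have hxy := mem_connectedComponentIn_of_hasContinuousLogOn hK.isClosed hy hx hCy
      (hlog.inv.congr fun z _ ↦ by simp)
    rw [← connectedComponentIn_eq hxy]
    exact mem_connectedComponentIn hy
  · exact mem_connectedComponentIn_of_not_isBounded hK.isBounded hy hCx hCy

theorem joinedIn_compl_union {K₁ K₂ : Set ℂ} (hK₁ : IsCompact K₁) (hK₂ : IsCompact K₂)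
    (hd : Disjoint K₁ K₂) {x y : ℂ} (h₁ : JoinedIn K₁ᶜ x y) (h₂ : JoinedIn K₂ᶜ x y) :
    JoinedIn (K₁ ∪ K₂)ᶜ x y :=
  joinedIn_compl_of_hasContinuousLogOn (hK₁.union hK₂) (not_or.mpr ⟨h₁.source_mem, h₂.source_mem⟩)
    (not_or.mpr ⟨h₁.target_mem, h₂.target_mem⟩)
    ((hasContinuousLogOn_div_sub_of_joinedIn h₁).union (hasContinuousLogOn_div_sub_of_joinedIn h₂)
      hK₁.isClosed hK₂.isClosed hd)

theorem Homeomorph.joinedIn_compl_union {X : Type*} [TopologicalSpace X] (e : X ≃ₜ ℂ)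
    {K₁ K₂ : Set X} (hK₁ : IsCompact K₁) (hK₂ : IsCompact K₂) (hd : Disjoint K₁ K₂) {x y : X}
    (h₁ : JoinedIn K₁ᶜ x y) (h₂ : JoinedIn K₂ᶜ x y) : JoinedIn (K₁ ∪ K₂)ᶜ x y := by
  have h := _root_.joinedIn_compl_union (hK₁.image e.continuous) (hK₂.image e.continuous)
    (disjoint_image_of_injective e.injective hd)
    (by simpa [e.image_compl] using h₁.map e.continuous)
    (by simpa [e.image_compl] using h₂.map e.continuous)
  simpa [← image_union, ← e.image_compl, e.image_symm, e.preimage_image]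
    using h.map e.symm.continuous

/-- Apply the planar lemma to the compact sets `ρ ⁻¹' Kᵢ`. -/
theorem joinedIn_diff_union_of_retraction {X : Type*} [TopologicalSpace X] (e : X ≃ₜ ℂ)
    {S K₁ K₂ B : Set X} (hK₁ : IsClosed K₁) (hK₂ : IsClosed K₂) (hd : Disjoint K₁ K₂)
    (hB : IsCompact B) {ρ : X → X} (hρ : Continuous ρ) (hρS : ∀ z, ρ z ∈ S)
    (hρ_id : ∀ z ∈ S, ρ z = z) {x y : X} (hρB : ∀ z ∉ B, ρ z = x)
    (h₁ : JoinedIn (S \ K₁) x y) (h₂ : JoinedIn (S \ K₂) x y) :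
    JoinedIn (S \ (K₁ ∪ K₂)) x y := by
  have hcompact : ∀ {K : Set X}, IsClosed K → x ∉ K → IsCompact (ρ ⁻¹' K) :=
    fun hK hxK ↦ hB.of_isClosed_subset (hK.preimage hρ) fun z hz ↦
      by_contra fun hzB ↦ hxK (hρB z hzB ▸ hz)
  have hsub : ∀ {K : Set X}, S \ K ⊆ (ρ ⁻¹' K)ᶜ := fun hz ↦ by
    simpa [hρ_id _ hz.1] using hz.2
  have h := e.joinedIn_compl_union (hcompact hK₁ h₁.source_mem.2) (hcompact hK₂ h₂.source_mem.2)
    (hd.preimage ρ) (h₁.mono hsub) (h₂.mono hsub)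
  rw [← hρ_id x h₁.source_mem.1, ← hρ_id y h₁.target_mem.1]
  exact (h.map hρ).mono (image_subset_iff.mpr fun z hz ↦ ⟨hρS z, by simpa using hz⟩)

theorem exists_retraction_closedBall {E : Type*} [NormedAddCommGroup E] [NormedSpace ℝ E] {c : E}
    (hc : c ∈ closedBall (0 : E) 1) :
    ∃ ρ : E → E, Continuous ρ ∧ (∀ z, ρ z ∈ closedBall (0 : E) 1) ∧
      (∀ z ∈ closedBall (0 : E) 1, ρ z = z) ∧ ∀ z ∉ closedBall (0 : E) 2, ρ z = c := by
  let rad : E → E := fun z ↦ (max 1 ‖z‖)⁻¹ • z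
  let s : E → ℝ := fun z ↦ projIcc 0 1 zero_le_one (‖z‖ - 1)
  have hrad : ∀ z, rad z ∈ closedBall (0 : E) 1 := fun z ↦ by
    rw [mem_closedBall_zero_iff, norm_smul, norm_inv, Real.norm_of_nonneg (by positivity)]
    exact inv_mul_le_one_of_le₀ (le_max_right _ _) (by positivity)
  refine ⟨fun z ↦ AffineMap.lineMap (rad z) c (s z), ?_, fun z ↦ ?_, fun z hz ↦ ?_, fun z hz ↦ ?_⟩
  · have : Continuous rad := Continuous.smul
      (continuous_const.max continuous_norm |>.inv₀ fun z ↦ by positivity) continuous_id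
    fun_prop
  · exact (convex_closedBall 0 1).lineMap_mem (hrad z) hc (projIcc 0 1 _ _).2
  · have hz1 := mem_closedBall_zero_iff.mp hz
    simp [rad, s, projIcc_of_le_left _ (sub_nonpos.mpr hz1), max_eq_left hz1]
  · have hz2 : 2 < ‖z‖ := by simpa using hz
    simp [s, projIcc_of_right_le _ (by linarith : (1 : ℝ) ≤ ‖z‖ - 1)]

theorem alexander_lemma_closed_disc_general
    (K₁ K₂ : Set (EuclideanSpace ℝ (Fin 2)))
    (hK₁c : IsClosed K₁) (hK₂c : IsClosed K₂)
    (hd : Disjoint K₁ K₂)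
    (x y : EuclideanSpace ℝ (Fin 2))
    (h₁ : JoinedIn (Metric.closedBall 0 1 \ K₁) x y)
    (h₂ : JoinedIn (Metric.closedBall 0 1 \ K₂) x y) :
    JoinedIn (Metric.closedBall 0 1 \ (K₁ ∪ K₂)) x y := by
  obtain ⟨ρ, hρ, hρD, hρ_id, hρ_const⟩ := exists_retraction_closedBall h₁.source_mem.1
  exact joinedIn_diff_union_of_retraction Complex.orthonormalBasisOneI.repr.toHomeomorph.symm
    hK₁c hK₂c hd (isCompact_closedBall 0 2) hρ hρD hρ_id hρ_const h₁ h₂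

/-- Alexander's lemma for the closed unit disc `D² ⊆ ℝ²`: if disjoint closed sets
`K₁, K₂ ⊆ D²` each fail to separate `x` from `y` in `D²`, then their union does not
separate `x` from `y` in `D²`. -/
theorem alexander_lemma_closed_disc
    (K₁ K₂ : Set (EuclideanSpace ℝ (Fin 2)))
    (hK₁c : IsClosed K₁) (hK₂c : IsClosed K₂)
    (hK₁D : K₁ ⊆ Metric.closedBall 0 1) (hK₂D : K₂ ⊆ Metric.closedBall 0 1)
    (hd : Disjoint K₁ K₂)
    (x y : EuclideanSpace ℝ (Fin 2))
    (hx : x ∈ Metric.closedBall 0 1 \ (K₁ ∪ K₂))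
    (hy : y ∈ Metric.closedBall 0 1 \ (K₁ ∪ K₂))
    (h₁ : JoinedIn (Metric.closedBall 0 1 \ K₁) x y)
    (h₂ : JoinedIn (Metric.closedBall 0 1 \ K₂) x y) :
    JoinedIn (Metric.closedBall 0 1 \ (K₁ ∪ K₂)) x y :=
  alexander_lemma_closed_disc_general K₁ K₂ hK₁c hK₂c hd x y h₁ h₂
end

section
/- (Effros' theorem, metric version.) Let X be a compact metric space which is homogeneous. Then for every ε > 0 and every x ∈ X, the set W(x, ε) of all y ∈ X such that there exists a homeomorphism h : X → X with h(x) = y and d(h(t), t) < ε for all t ∈ X, is an open subset of X. -/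
/-!
Write `W(x, ε)` (`smallOrbit x ε` below) for the set in the statement. Homeomorphisms moving points
less than `ε`, encoded as pairs of mutually inverse maps, form a Polish space, so `W(x, ε)` is
analytic and therefore has the Baire property (Lusin–Sierpiński, via the Souslin scheme of
cylinders of `ℕ → ℕ`). Countably many homeomorphic images of `W(x, ε)` cover `X` by homogeneity,
so `W(x, ε)` is non-meagre, hence comeagre in some nonempty open set; pulling that set back by an
element of `W(x, ε / 2)` makes `W(x, ε)` comeagre near `x`. For `y` close to `x` the comeagre
neighbourhoods of `x` and `y` meet in a point of `W(x, ε / 2) ∩ W(y, ε / 2)`, so `y ∈ W(x, ε)`.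
Openness at an arbitrary point of `W(x, ε)` follows because, `X` being compact, the homeomorphism
witnessing it moves points by at most some `a < ε`, and `W(y, ε - a) ⊆ W(x, ε)`.
-/

open Set Filter Topology TopologicalSpace MeasureTheory PiNat

section Meagre

variable {Y : Type*} [TopologicalSpace Y]

def nonMeagrePoints (s : Set Y) : Set Y := {x | ∀ U ∈ 𝓝 x, ¬IsMeagre (s ∩ U)}

theorem isClosed_nonMeagrePoints (s : Set Y) : IsClosed (nonMeagrePoints s) := by
  refine isClosed_iff_nhds.2 fun x hx U hU => ?_
  obtain ⟨V, hVU, hV, hxV⟩ := mem_nhds_iff.1 hU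
  obtain ⟨y, hyV, hy⟩ := hx V (hV.mem_nhds hxV)
  exact fun hm => hy V (hV.mem_nhds hyV) (hm.mono (inter_subset_inter_right s hVU))

theorem nonMeagrePoints_subset_closure (s : Set Y) : nonMeagrePoints s ⊆ closure s := by
  refine fun x hx => mem_closure_iff_nhds.2 fun U hU => ?_
  by_contra h
  exact hx U hU (by rw [inter_comm, not_nonempty_iff_eq_empty.1 h]; exact IsMeagre.empty)

theorem isMeagre_diff_nonMeagrePoints [SecondCountableTopology Y] (s : Set Y) :
    IsMeagre (s \ nonMeagrePoints s) := by
  set 𝓑 := {B ∈ countableBasis Y | IsMeagre (s ∩ B)}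
  have hcover : s \ nonMeagrePoints s ⊆ ⋃ B ∈ 𝓑, s ∩ B := by
    rintro x ⟨hxs, hx⟩
    simp only [nonMeagrePoints, mem_ofPred_eq, not_forall, not_not] at hx
    obtain ⟨U, hU, hm⟩ := hx
    obtain ⟨B, hB, hxB, hBU⟩ := (isBasis_countableBasis Y).mem_nhds_iff.1 hU
    exact mem_biUnion ⟨hB, hm.mono (inter_subset_inter_right s hBU)⟩ ⟨hxs, hxB⟩
  exact (isMeagre_biUnion ((countable_countableBasis Y).mono (sep_subset _ _))
    fun B hB => hB.2).mono hcover

theorem Filter.EventuallyEq.isMeagre_diff {s t : Set Y} (h : s =ᵇ t) : IsMeagre (s \ t) :=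
  eventuallyEq_empty.1 (by simpa using h.diff (EventuallyEq.refl _ t))

theorem isMeagre_of_subset_nonMeagrePoints {s Z : Set Y} (hZ : BaireMeasurableSet Z)
    (hZs : Z ⊆ nonMeagrePoints s) (hdisj : Disjoint Z s) : IsMeagre Z := by
  obtain ⟨u, hu, hZu⟩ := hZ.residualEq_isOpen
  have hsu : IsMeagre (s ∩ u) := by
    refine hZu.symm.isMeagre_diff.mono fun x hx => ?_
    exact ⟨hx.2, fun hxZ => hdisj.ne_of_mem hxZ hx.1 rfl⟩
  have hZu_empty : Z ∩ u = ∅ :=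
    eq_empty_of_forall_notMem fun x hx => hZs hx.1 u (hu.mem_nhds hx.2) hsu
  refine hZu.isMeagre_diff.mono fun x hxZ => ?_
  exact ⟨hxZ, fun hxu => hZu_empty.subset ⟨hxZ, hxu⟩⟩

theorem isMeagre_nonMeagrePoints_diff_iUnion [SecondCountableTopology Y] {ι : Type*}
    [Countable ι] {s : Set Y} {t : ι → Set Y} (hst : s ⊆ ⋃ i, t i) :
    IsMeagre (nonMeagrePoints s \ ⋃ i, nonMeagrePoints (t i)) := by
  set m := ⋃ i, t i \ nonMeagrePoints (t i)
  have hm : IsMeagre m := isMeagre_iUnion fun i => isMeagre_diff_nonMeagrePoints (t i)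
  have hclosed (u : Set Y) : BaireMeasurableSet (nonMeagrePoints u) :=
    .of_compl (isClosed_nonMeagrePoints u).isOpen_compl.baireMeasurableSet
  have hZ : IsMeagre ((nonMeagrePoints s \ ⋃ i, nonMeagrePoints (t i)) \ m) := by
    refine isMeagre_of_subset_nonMeagrePoints
      (((hclosed s).diff (.iUnion fun i => hclosed (t i))).diff hm.baireMeasurableSet)
      (fun x hx => hx.1.1) (disjoint_left.2 fun x hx hxs => ?_)
    obtain ⟨i, hi⟩ := mem_iUnion.1 (hst hxs)
    by_cases hxi : x ∈ nonMeagrePoints (t i)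
    · exact hx.1.2 (mem_iUnion_of_mem i hxi)
    · exact hx.2 (mem_iUnion_of_mem i ⟨hi, hxi⟩)
  refine (hZ.union hm).mono fun x hx => ?_
  by_cases hxm : x ∈ m
  · exact Or.inr hxm
  · exact Or.inl ⟨hx, hxm⟩

theorem BaireMeasurableSet.of_isMeagre_nonMeagrePoints_diff [SecondCountableTopology Y]
    {s : Set Y} (h : IsMeagre (nonMeagrePoints s \ s)) : BaireMeasurableSet s := by
  have hs : s = (nonMeagrePoints s \ (nonMeagrePoints s \ s)) ∪ (s \ nonMeagrePoints s) := by
    ext x; by_cases x ∈ nonMeagrePoints s <;> by_cases x ∈ s <;> simp_all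
  rw [hs]
  have hclosed : BaireMeasurableSet (nonMeagrePoints s) :=
    .of_compl (isClosed_nonMeagrePoints s).isOpen_compl.baireMeasurableSet
  exact (hclosed.diff h.baireMeasurableSet).union
    (isMeagre_diff_nonMeagrePoints s).baireMeasurableSet

theorem BaireMeasurableSet.exists_isOpen_isMeagre_diff {s : Set Y} (hs : BaireMeasurableSet s)
    (h : ¬IsMeagre s) : ∃ u, IsOpen u ∧ u.Nonempty ∧ IsMeagre (u \ s) := by
  obtain ⟨u, hu, hsu⟩ := hs.residualEq_isOpen
  refine ⟨u, hu, nonempty_iff_ne_empty.2 fun hu0 => h ?_, hsu.symm.isMeagre_diff⟩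
  simpa [hu0] using hsu.isMeagre_diff

theorem IsOpen.inter_nonempty_of_isMeagre_diff [BaireSpace Y] {O s : Set Y} (hO : IsOpen O)
    (hne : O.Nonempty) (h : IsMeagre (O \ s)) : (O ∩ s).Nonempty := by
  by_contra hempty
  refine not_isMeagre_of_isOpen hO hne (h.mono fun x hx => ?_)
  exact ⟨hx, fun hxs => hempty ⟨x, hx, hxs⟩⟩

end Meagre

theorem PiNat.exists_forall_res {P : List ℕ → Prop} (hnil : P [])
    (hcons : ∀ t, P t → ∃ k, P (k :: t)) : ∃ σ : ℕ → ℕ, ∀ n, P (res σ n) := by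
  choose k hk using hcons
  let branch : ℕ → {t // P t} := fun n =>
    Nat.rec ⟨[], hnil⟩ (fun _ t => ⟨k t.1 t.2 :: t.1, hk t.1 t.2⟩) n
  refine ⟨fun n => k (branch n).1 (branch n).2, fun n => ?_⟩
  suffices res _ n = (branch n).1 from this ▸ (branch n).2
  induction n with
  | zero => rfl
  | succ n ih => rw [res_succ, ih]

theorem PiNat.eq_of_forall_mem_closure_image_cylinder {Y : Type*} [TopologicalSpace Y] [T3Space Y]
    {θ : (ℕ → ℕ) → Y} {σ : ℕ → ℕ} (hθ : ContinuousAt θ σ) {x : Y}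
    (hx : ∀ n, x ∈ closure (θ '' cylinder σ n)) : x = θ σ := by
  by_contra hne
  obtain ⟨C, hC, hCc, hCx⟩ := exists_mem_nhds_isClosed_subset
    (isOpen_compl_singleton.mem_nhds (Ne.symm hne))
  obtain ⟨_, ⟨τ, n, rfl⟩, hστ, hsub⟩ :=
    (isTopologicalBasis_cylinders fun _ => ℕ).mem_nhds_iff.1 (hθ hC)
  rw [← mem_cylinder_iff_eq.1 hστ] at hsub
  exact hCx (closure_minimal (image_subset_iff.2 hsub) hCc (hx n)) rfl

theorem PiNat.baireMeasurableSet_range {Y : Type*} [TopologicalSpace Y] [SecondCountableTopology Y]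
    [T3Space Y] {θ : (ℕ → ℕ) → Y} (hθ : Continuous θ) : BaireMeasurableSet (range θ) := by
  -- `res σ n` lists `σ (n - 1), …, σ 0`, so `A (k :: t)` is the piece of `A t` where the next
  -- coordinate is `k`.
  set A : List ℕ → Set Y := fun t => θ '' {σ | res σ t.length = t}
  have hA_nil : A [] = range θ := by simp [A, image_univ]
  have hA_cons (t : List ℕ) : A t ⊆ ⋃ k, A (k :: t) := by
    rintro _ ⟨σ, hσ, rfl⟩
    exact mem_iUnion.2 ⟨σ t.length, σ, by simp_all [A], rfl⟩
  have hA_res (σ : ℕ → ℕ) (n : ℕ) : A (res σ n) = θ '' cylinder σ n := by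
    simp [A, cylinder_eq_res]
  refine .of_isMeagre_nonMeagrePoints_diff ((isMeagre_iUnion fun t =>
    isMeagre_nonMeagrePoints_diff_iUnion (hA_cons t)).mono ?_)
  rintro x ⟨hx, hxθ⟩
  by_contra hbad
  simp only [mem_iUnion, Set.mem_sdiff, not_exists, not_and, not_forall, not_not] at hbad
  obtain ⟨σ, hσ⟩ := exists_forall_res (P := fun t => x ∈ nonMeagrePoints (A t))
    (hA_nil ▸ hx) hbad
  refine hxθ ⟨σ, (eq_of_forall_mem_closure_image_cylinder hθ.continuousAt fun n => ?_).symm⟩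
  exact hA_res σ n ▸ nonMeagrePoints_subset_closure _ (hσ n)

theorem MeasureTheory.AnalyticSet.baireMeasurableSet {Y : Type*} [TopologicalSpace Y]
    [SecondCountableTopology Y] [T3Space Y] {s : Set Y} (hs : AnalyticSet s) :
    BaireMeasurableSet s := by
  rw [AnalyticSet] at hs
  rcases hs with rfl | ⟨θ, hθ, rfl⟩
  · exact isOpen_empty.baireMeasurableSet
  · exact PiNat.baireMeasurableSet_range hθ

section SmallOrbit

variable {X : Type*} [MetricSpace X]

def smallOrbit (x : X) (ε : ℝ) : Set X := {y | ∃ h : X ≃ₜ X, h x = y ∧ ∀ t, dist (h t) t < ε}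

theorem Homeomorph.dist_symm_apply_lt {h : X ≃ₜ X} {ε : ℝ} (hh : ∀ t, dist (h t) t < ε) (t : X) :
    dist (h.symm t) t < ε := by
  simpa [dist_comm] using hh (h.symm t)

theorem apply_mem_smallOrbit {h : X ≃ₜ X} {ε : ℝ} (hh : ∀ t, dist (h t) t < ε) (x : X) :
    h x ∈ smallOrbit x ε :=
  ⟨h, rfl, hh⟩

theorem mem_smallOrbit_symm {x y : X} {ε : ℝ} (hy : y ∈ smallOrbit x ε) : x ∈ smallOrbit y ε := by
  obtain ⟨h, rfl, hh⟩ := hy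
  simpa using apply_mem_smallOrbit (Homeomorph.dist_symm_apply_lt hh) (h x)

theorem mem_smallOrbit_trans {x y z : X} {a b : ℝ} (hy : y ∈ smallOrbit x a)
    (hz : z ∈ smallOrbit y b) : z ∈ smallOrbit x (a + b) := by
  obtain ⟨h, rfl, hh⟩ := hy
  obtain ⟨k, rfl, hk⟩ := hz
  refine ⟨h.trans k, rfl, fun t => ?_⟩
  calc dist (k (h t)) t ≤ dist (k (h t)) (h t) + dist (h t) t := dist_triangle _ _ _
    _ < b + a := add_lt_add (hk _) (hh t)
    _ = a + b := add_comm b a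

variable [CompactSpace X]

theorem exists_lt_mem_smallOrbit {x y : X} {ε : ℝ} (hy : y ∈ smallOrbit x ε) :
    ∃ a < ε, y ∈ smallOrbit x a := by
  obtain ⟨h, rfl, hh⟩ := hy
  obtain ⟨t₀, -, ht₀⟩ := isCompact_univ.exists_isMaxOn ⟨x, trivial⟩
    (h.continuous.dist continuous_id).continuousOn
  refine ⟨(dist (h t₀) t₀ + ε) / 2, by linarith [hh t₀], apply_mem_smallOrbit (fun t => ?_) x⟩
  linarith [hh t₀, show dist (h t) t ≤ dist (h t₀) t₀ from ht₀ (mem_univ t)]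

theorem analyticSet_smallOrbit (x : X) {ε : ℝ} (hε : 0 < ε) : AnalyticSet (smallOrbit x ε) := by
  -- Homeomorphisms alone are not closed in `C(X, X)`; the pairs `(h, h.symm)` are.
  set J : Set (C(X, X) × C(X, X)) :=
    {p | p.1.comp p.2 = ContinuousMap.id X ∧ p.2.comp p.1 = ContinuousMap.id X}
  have hJ : IsClosed J :=
    (isClosed_eq (ContinuousMap.continuous_comp'.comp (continuous_snd.prodMk continuous_fst))
      continuous_const).inter (isClosed_eq ContinuousMap.continuous_comp' continuous_const)
  have : PolishSpace J := hJ.polishSpace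
  set U : Set J := (fun q => q.1.1) ⁻¹' Metric.ball (ContinuousMap.id X) ε
  have hU : IsOpen U := Metric.isOpen_ball.preimage (continuous_fst.comp continuous_subtype_val)
  have hWU : smallOrbit x ε = (fun q : J => q.1.1 x) '' U := by
    ext y
    simp only [smallOrbit, U, mem_ofPred_eq, mem_image, mem_preimage, Metric.mem_ball,
      ContinuousMap.dist_lt_iff hε, ContinuousMap.id_apply]
    constructor
    · rintro ⟨h, rfl, hh⟩
      exact ⟨⟨((h : C(X, X)), (h.symm : C(X, X))), ContinuousMap.ext h.apply_symm_apply,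
        ContinuousMap.ext h.symm_apply_apply⟩, hh, rfl⟩
    · rintro ⟨⟨⟨f, g⟩, hfg, hgf⟩, hf, rfl⟩
      exact ⟨⟨⟨f, g, ContinuousMap.congr_fun hgf, ContinuousMap.congr_fun hfg⟩, f.continuous,
        g.continuous⟩, rfl, hf⟩
  rw [hWU]
  exact hU.analyticSet_image ((continuous_eval_const x).comp
    (continuous_fst.comp continuous_subtype_val))

theorem exists_countable_homeomorph_dist_lt {ε : ℝ} (hε : 0 < ε) :
    ∃ C : Set (X ≃ₜ X), C.Countable ∧ ∀ k : X ≃ₜ X, ∃ g ∈ C, ∀ t, dist (g t) (k t) < ε := by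
  let toMap : (X ≃ₜ X) → C(X, X) := fun h => h
  have hinj : Function.Injective toMap := fun g h hgh =>
    Homeomorph.ext (ContinuousMap.congr_fun hgh)
  obtain ⟨c, hc, hcount, hdense⟩ :=
    (IsSeparable.of_separableSpace (range toMap)).exists_countable_dense_subset
  refine ⟨toMap ⁻¹' c, hcount.preimage hinj, fun k => ?_⟩
  obtain ⟨_, hgc, hgk⟩ := Metric.mem_closure_iff.1 (hdense (mem_range_self k)) ε hε
  obtain ⟨g, rfl⟩ := hc hgc
  exact ⟨g, hgc, fun t => dist_comm (k t) (g t) ▸ (ContinuousMap.dist_lt_iff hε).1 hgk t⟩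

theorem not_isMeagre_smallOrbit (hom : ∀ x y : X, ∃ h : X ≃ₜ X, h x = y) (x : X)
    {ε : ℝ} (hε : 0 < ε) : ¬IsMeagre (smallOrbit x ε) := by
  intro hW
  obtain ⟨C, hC, hCk⟩ := exists_countable_homeomorph_dist_lt (X := X) hε
  have hcover : univ ⊆ ⋃ g ∈ C, (g : X ≃ₜ X) ⁻¹' smallOrbit x ε := by
    intro y _
    obtain ⟨h, rfl⟩ := hom x y
    -- `g` uniformly close to `h.symm` makes `g ∘ h` small, and `g (h x) ∈ smallOrbit x ε`.
    obtain ⟨g, hgC, hg⟩ := hCk h.symm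
    refine mem_biUnion hgC (apply_mem_smallOrbit (h := h.trans g) (fun t => ?_) x)
    simpa using hg (h t)
  exact not_isMeagre_of_isOpen isOpen_univ ⟨x, trivial⟩
    ((isMeagre_biUnion hC fun g _ => hW.preimage_of_isOpenMap g.continuous g.isOpenMap).mono hcover)

theorem exists_isOpen_mem_isMeagre_diff_smallOrbit (hom : ∀ x y : X, ∃ h : X ≃ₜ X, h x = y)
    (x : X) {ε : ℝ} (hε : 0 < ε) : ∃ O, IsOpen O ∧ x ∈ O ∧ IsMeagre (O \ smallOrbit x ε) := by
  obtain ⟨O, hO, hOne, hOW⟩ := (analyticSet_smallOrbit x (half_pos hε)).baireMeasurableSet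
    |>.exists_isOpen_isMeagre_diff (not_isMeagre_smallOrbit hom x (half_pos hε))
  obtain ⟨_, hwO, h, rfl, hh⟩ := hO.inter_nonempty_of_isMeagre_diff hOne hOW
  refine ⟨h ⁻¹' O, hO.preimage h.continuous, hwO,
    (hOW.preimage_of_isOpenMap h.continuous h.isOpenMap).mono ?_⟩
  rintro u ⟨huO, huW⟩
  refine ⟨huO, fun hhu => huW ?_⟩
  have hu : u ∈ smallOrbit (h u) (ε / 2) := by
    simpa using apply_mem_smallOrbit (Homeomorph.dist_symm_apply_lt hh) (h u)
  simpa using mem_smallOrbit_trans hhu hu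

theorem smallOrbit_mem_nhds (hom : ∀ x y : X, ∃ h : X ≃ₜ X, h x = y) (x : X) {ε : ℝ}
    (hε : 0 < ε) : smallOrbit x ε ∈ 𝓝 x := by
  obtain ⟨O, hO, hxO, hOW⟩ := exists_isOpen_mem_isMeagre_diff_smallOrbit hom x (half_pos hε)
  refine mem_of_superset (hO.mem_nhds hxO) fun y hyO => ?_
  obtain ⟨O', hO', hyO', hO'W⟩ := exists_isOpen_mem_isMeagre_diff_smallOrbit hom y (half_pos hε)
  have hcommon : IsMeagre ((O ∩ O') \ (smallOrbit x (ε / 2) ∩ smallOrbit y (ε / 2))) := by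
    refine (hOW.union hO'W).mono fun u hu => ?_
    simp only [Set.mem_sdiff, mem_inter_iff, mem_union] at hu ⊢
    tauto
  obtain ⟨u, -, hxu, hyu⟩ := (hO.inter hO').inter_nonempty_of_isMeagre_diff ⟨y, hyO, hyO'⟩ hcommon
  simpa using mem_smallOrbit_trans hxu (mem_smallOrbit_symm hyu)

end SmallOrbit

theorem effros_open_general
    {X : Type*} [MetricSpace X] [CompactSpace X]
    (hom : ∀ x y : X, ∃ h : X ≃ₜ X, h x = y)
    (ε : ℝ) (x : X) :
    IsOpen {y : X | ∃ h : X ≃ₜ X, h x = y ∧ ∀ t : X, dist (h t) t < ε} := by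
  change IsOpen (smallOrbit x ε)
  refine isOpen_iff_mem_nhds.2 fun y hy => ?_
  obtain ⟨a, ha, hya⟩ := exists_lt_mem_smallOrbit hy
  refine mem_of_superset (smallOrbit_mem_nhds hom y (sub_pos.2 ha)) fun z hz => ?_
  simpa using mem_smallOrbit_trans hya hz

/-- Effros' theorem (metric version): in a homogeneous compact metric space, for every
`ε > 0` and `x`, the set of points `y` reachable from `x` by a homeomorphism moving
every point less than `ε` is open. -/
theorem effros_open
    {X : Type*} [MetricSpace X] [CompactSpace X]
    (hom : ∀ x y : X, ∃ h : X ≃ₜ X, h x = y)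
    (ε : ℝ) (hε : 0 < ε) (x : X) :
    IsOpen {y : X | ∃ h : X ≃ₜ X, h x = y ∧ ∀ t : X, dist (h t) t < ε} :=
  effros_open_general hom ε x
end

section
/- Let Y be a locally connected, simply connected metric continuum, let K be a closed subset of Y, and let x, y ∈ Y ∖ K be points lying in different connected components of Y ∖ K. Let C_x be the connected component of Y ∖ K containing x, and let C_y be the connected component of Y ∖ cl(C_x) containing y. Then the boundary ∂C_y is connected, x and y lie in different connected components of Y ∖ ∂C_y, and no proper closed subset of ∂C_y separates x from y (i.e., for every closed set L ⊊ ∂C_y, x and y lie in the same connected component of Y ∖ L). -/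
/-!
Open connected subsets of a complete, locally connected metric space are path connected: a path
from `a` to `b` is the limit of a sequence of chains of small connected open sets from `a` to `b`,
each chain refining the previous one, with the links of the `k`-th chain assigned to equal
subintervals of `[0, 1]`. So `Y` is locally path connected and, being simply connected, lifts
maps to `ℝ/ℤ` through `ℝ`; this makes it unicoherent. Every component of `Y ∖ cl Cx` other than
`Cy` abuts `cl Cx`, so `Y ∖ Cy` is connected, and unicoherence makes `∂Cy` connected.
As `∂Cy ⊆ cl Cx`, a point `p ∈ ∂Cy ∖ L` lies in the closures of both `Cx` and `Cy`, so the
component of `Y ∖ L` through `p` contains `x` and `y`.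
-/

open Set Filter Topology Metric

theorem Nat.succ_div_mod_of_mod_add_one_lt {t m : ℕ} (h : t % m + 1 < m) :
    (t + 1) / m = t / m ∧ (t + 1) % m = t % m + 1 := by
  have hm : 0 < m := by omega
  have ht : t + 1 = (t % m + 1) + m * (t / m) := by have := Nat.div_add_mod t m; omega
  rw [ht, Nat.add_mul_div_left _ _ hm, Nat.add_mul_mod_self_left, Nat.div_eq_of_lt h,
    Nat.mod_eq_of_lt h]
  simp

theorem Nat.succ_div_mod_of_mod_add_one_eq {t m : ℕ} (h : t % m + 1 = m) :
    (t + 1) / m = t / m + 1 ∧ (t + 1) % m = 0 := by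
  have hm : 0 < m := by omega
  have ht : t + 1 = m * (t / m + 1) := by have := Nat.div_add_mod t m; rw [mul_add]; omega
  rw [ht, Nat.mul_div_cancel_left _ hm, Nat.mul_mod_right]
  simp

theorem Nat.floor_add_one_le {R : Type*} [Ring R] [LinearOrder R] [IsStrictOrderedRing R]
    [FloorSemiring R] (x : R) : ⌊x + 1⌋₊ ≤ ⌊x⌋₊ + 1 := by
  rcases le_or_gt 0 x with hx | hx
  · rw [Nat.floor_add_one hx]
  · rw [Nat.floor_eq_zero.mpr ((add_lt_iff_neg_right 1).2 hx)]; omega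

/-- The link of an `n`-link chain assigned to the parameter `u` when `[0, 1]` is cut into `n`
equal pieces; clipped so that `u = 1` falls into the last link. -/
noncomputable def chainIndex (n : ℕ) (u : ℝ) : ℕ := min ⌊u * n⌋₊ (n - 1)

theorem chainIndex_lt {n : ℕ} (hn : 0 < n) (u : ℝ) : chainIndex n u < n := by
  unfold chainIndex; omega

@[simp] theorem chainIndex_zero (n : ℕ) : chainIndex n 0 = 0 := by simp [chainIndex]

@[simp] theorem chainIndex_one (n : ℕ) : chainIndex n 1 = n - 1 := by simp [chainIndex]

theorem chainIndex_mul_div (n : ℕ) {m : ℕ} (hm : 0 < m) (u : ℝ) :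
    chainIndex (n * m) u / m = chainIndex n u := by
  rcases Nat.eq_zero_or_pos n with rfl | hn
  · simp [chainIndex]
  have hfloor : ⌊u * ↑(n * m)⌋₊ / m = ⌊u * n⌋₊ := by
    rw [← Nat.floor_div_natCast]
    congr 1
    push_cast
    field_simp
  have htop : (n * m - 1) / m = n - 1 := by
    have := Nat.le_mul_of_pos_left m hn
    apply Nat.div_eq_of_lt_le
    · rw [Nat.sub_one_mul]; omega
    · rw [Nat.sub_add_cancel hn]; omega
  unfold chainIndex
  rw [← hfloor, ← htop]
  exact Monotone.map_min fun _ _ h => Nat.div_le_div_right h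

theorem chainIndex_le_add_one {n : ℕ} (hn : 0 < n) {u v : ℝ} (huv : u ≤ v)
    (hvu : v ≤ u + 1 / n) :
    chainIndex n u ≤ chainIndex n v ∧ chainIndex n v ≤ chainIndex n u + 1 := by
  have hn' : (0 : ℝ) < n := Nat.cast_pos.mpr hn
  have h1 : ⌊u * n⌋₊ ≤ ⌊v * n⌋₊ := Nat.floor_le_floor (by gcongr)
  have h2 : ⌊v * n⌋₊ ≤ ⌊u * n⌋₊ + 1 := by
    refine (Nat.floor_le_floor ?_).trans (Nat.floor_add_one_le _)
    calc v * n ≤ (u + 1 / n) * n := by gcongr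
      _ = u * n + 1 := by field_simp
  unfold chainIndex
  omega

section Chains

variable {Y : Type*} [MetricSpace Y]

structure IsSmallLink (V : Set Y) (ε : ℝ) (N : Set Y) : Prop where
  isOpen : IsOpen N
  isPreconnected : IsPreconnected N
  closure_subset : closure N ⊆ V
  dist_le : ∀ p ∈ N, ∀ q ∈ N, dist p q ≤ ε

structure IsLinkChain (V : Set Y) (ε : ℝ) (a b : Y) (n : ℕ) (z : ℕ → Y) (L : ℕ → Set Y) :
    Prop where
  start : z 0 = a
  finish : z n = b
  link : ∀ i < n, IsSmallLink V ε (L i)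
  mem_left : ∀ i < n, z i ∈ L i
  mem_right : ∀ i < n, z (i + 1) ∈ L i

variable {V W N : Set Y} {ε : ℝ} {a b c : Y} {n m : ℕ} {z : ℕ → Y} {L : ℕ → Set Y}

theorem IsSmallLink.mono (h : IsSmallLink V ε N) (hVW : V ⊆ W) : IsSmallLink W ε N :=
  ⟨h.isOpen, h.isPreconnected, h.closure_subset.trans hVW, h.dist_le⟩

theorem IsLinkChain.mono (h : IsLinkChain V ε a b n z L) (hVW : V ⊆ W) :
    IsLinkChain W ε a b n z L :=
  ⟨h.start, h.finish, fun i hi => (h.link i hi).mono hVW, h.mem_left, h.mem_right⟩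

theorem exists_isSmallLink [LocallyConnectedSpace Y] (hV : IsOpen V) (hc : c ∈ V) (hε : 0 < ε) :
    ∃ N, IsSmallLink V ε N ∧ c ∈ N := by
  obtain ⟨r, hr, hrV⟩ := Metric.isOpen_iff.mp hV c hc
  set ρ := min (r / 2) (ε / 2)
  have hρ : 0 < ρ := lt_min (half_pos hr) (half_pos hε)
  have hN : connectedComponentIn (ball c ρ) c ⊆ ball c ρ := connectedComponentIn_subset _ _
  refine ⟨connectedComponentIn (ball c ρ) c, ⟨isOpen_ball.connectedComponentIn,
    isPreconnected_connectedComponentIn, ?_, fun p hp q hq => ?_⟩,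
    mem_connectedComponentIn (mem_ball_self hρ)⟩
  · calc closure (connectedComponentIn (ball c ρ) c) ⊆ closedBall c ρ :=
          (closure_mono hN).trans closure_ball_subset_closedBall
      _ ⊆ ball c r := closedBall_subset_ball (by linarith [min_le_left (r / 2) (ε / 2)])
      _ ⊆ V := hrV
  · linarith [dist_triangle_right p q c, mem_ball.mp (hN hp), mem_ball.mp (hN hq),
      min_le_right (r / 2) (ε / 2)]

theorem IsLinkChain.snoc (h : IsLinkChain V ε a b n z L) (hN : IsSmallLink V ε N) (hb : b ∈ N)
    (hc : c ∈ N) :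
    IsLinkChain V ε a c (n + 1) (Function.update z (n + 1) c) (Function.update L n N) := by
  have hlt {i} (hi : i < n) : i ≠ n ∧ i + 1 ≠ n + 1 ∧ i ≠ n + 1 := by omega
  refine ⟨by simpa [Function.update_of_ne] using h.start, by simp, fun i hi => ?_,
    fun i hi => ?_, fun i hi => ?_⟩ <;>
  rcases (Nat.lt_succ_iff.mp hi).lt_or_eq with hi | rfl
  · simpa [(hlt hi).1] using h.link i hi
  · simpa using hN
  · simpa [(hlt hi).1, (hlt hi).2.2] using h.mem_left i hi
  · simpa [h.finish] using hb
  · simpa [(hlt hi).1, (hlt hi).2.1] using h.mem_right i hi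
  · simpa using hc

theorem exists_isLinkChain [LocallyConnectedSpace Y] (hV : IsOpen V) (hVc : IsPreconnected V)
    (ha : a ∈ V) (hb : b ∈ V) (hε : 0 < ε) :
    ∃ n z L, 0 < n ∧ IsLinkChain V ε a b n z L := by
  -- the endpoints of chains starting at `a` form a clopen subset of `V`
  set S := {w | ∃ n z L, 0 < n ∧ IsLinkChain V ε a w n z L}
  have hSV : S ⊆ V := by
    rintro w ⟨n, z, L, hn, hchain⟩
    have hwL := hchain.mem_right (n - 1) (by omega)
    rw [Nat.sub_add_cancel hn, hchain.finish] at hwL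
    exact (hchain.link (n - 1) (by omega)).closure_subset (subset_closure hwL)
  have hsnoc : ∀ w ∈ S, ∀ N, IsSmallLink V ε N → w ∈ N → N ⊆ S := by
    rintro w ⟨n, z, L, -, hchain⟩ N hN hw w' hw'
    exact ⟨n + 1, _, _, n.succ_pos, hchain.snoc hN hw hw'⟩
  have hS : IsOpen S := isOpen_iff_forall_mem_open.mpr fun w hw => by
    obtain ⟨N, hN, hwN⟩ := exists_isSmallLink hV (hSV hw) hε
    exact ⟨N, hsnoc w hw N hN hwN, hN.isOpen, hwN⟩
  have hVS : IsOpen (V \ S) := isOpen_iff_forall_mem_open.mpr fun w hw => by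
    obtain ⟨N, hN, hwN⟩ := exists_isSmallLink hV hw.1 hε
    refine ⟨N, fun w' hw' => ⟨hN.closure_subset (subset_closure hw'), fun hw'S => hw.2 ?_⟩,
      hN.isOpen, hwN⟩
    exact hsnoc w' hw'S N hN hw' hwN
  have haS : a ∈ S := by
    obtain ⟨N, hN, haN⟩ := exists_isSmallLink hV ha hε
    exact ⟨1, fun _ => a, fun _ => N, one_pos, rfl, rfl, fun _ _ => hN, fun _ _ => haN,
      fun _ _ => haN⟩
  exact hVc.subset_left_of_subset_union hS hVS disjoint_sdiff_right
    (fun w hw => (em (w ∈ S)).imp id fun h => ⟨hw, h⟩) ⟨a, ha, haS⟩ hb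

theorem IsLinkChain.pad (h : IsLinkChain V ε a b n z L) (hn : 0 < n) (hnm : n ≤ m) :
    IsLinkChain V ε a b m (fun j => z (min j n)) (fun j => L (min j (n - 1))) := by
  have hlast := h.mem_right (n - 1) (by omega)
  rw [Nat.sub_add_cancel hn] at hlast
  refine ⟨by simpa using h.start, by simpa [min_eq_right hnm] using h.finish,
    fun j _ => h.link _ (by omega), fun j _ => ?_, fun j _ => ?_⟩ <;>
  rcases lt_or_ge j n with hjn | hjn
  · simpa [min_eq_left hjn.le, min_eq_left (Nat.le_sub_one_of_lt hjn)] using h.mem_left j hjn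
  · simpa [min_eq_right hjn, min_eq_right (show n - 1 ≤ j by omega)] using hlast
  · simpa [min_eq_left (Nat.succ_le_of_lt hjn), min_eq_left (Nat.le_sub_one_of_lt hjn)]
      using h.mem_right j hjn
  · simpa [min_eq_right (hjn.trans j.le_succ), min_eq_right (show n - 1 ≤ j by omega)]
      using hlast

theorem isLinkChain_concat {c : ℕ → ℕ → Y} {H : ℕ → ℕ → Set Y} (hm : 0 < m)
    (hstart : ∀ i ≤ n, c i 0 = z i)
    (hc : ∀ i < n, IsLinkChain V ε (z i) (z (i + 1)) m (c i) (H i)) :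
    IsLinkChain V ε (z 0) (z n) (n * m) (fun t => c (t / m) (t % m))
      (fun t => H (t / m) (t % m)) := by
  have hi {t} (ht : t < n * m) : t / m < n := Nat.div_lt_of_lt_mul (by rwa [mul_comm])
  have hj (t) : t % m < m := Nat.mod_lt t hm
  have hlast : c (n * m / m) (n * m % m) = z n := by
    simpa [Nat.mul_div_cancel _ hm] using hstart n le_rfl
  refine ⟨by simpa using hstart 0 (Nat.zero_le n), hlast,
    fun t ht => (hc _ (hi ht)).link _ (hj t), fun t ht => (hc _ (hi ht)).mem_left _ (hj t),
    fun t ht => ?_⟩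
  have hnext : c ((t + 1) / m) ((t + 1) % m) = c (t / m) (t % m + 1) := by
    rcases (Nat.succ_le_of_lt (hj t)).lt_or_eq with hlt | heq
    · obtain ⟨h1, h2⟩ := Nat.succ_div_mod_of_mod_add_one_lt hlt
      rw [h1, h2]
    · obtain ⟨h1, h2⟩ := Nat.succ_div_mod_of_mod_add_one_eq heq
      rw [h1, h2, show t % m + 1 = m from heq, hstart _ (hi ht), (hc _ (hi ht)).finish]
  simpa only [hnext] using (hc _ (hi ht)).mem_right _ (hj t)

theorem IsLinkChain.exists_refinement [LocallyConnectedSpace Y] (h : IsLinkChain V ε a b n z L)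
    {ε' : ℝ} (hε' : 0 < ε') :
    ∃ m, 0 < m ∧ ∃ z' L', IsLinkChain V ε' a b (n * m) z' L' ∧
      ∀ t < n * m, closure (L' t) ⊆ L (t / m) := by
  have hpieces : ∀ i, ∃ k c H, 0 < k ∧ c 0 = z i ∧
      (i < n → IsLinkChain (L i) ε' (z i) (z (i + 1)) k c H) := by
    intro i
    by_cases hi : i < n
    · obtain ⟨k, c, H, hk, hchain⟩ := exists_isLinkChain (h.link i hi).isOpen
        (h.link i hi).isPreconnected (h.mem_left i hi) (h.mem_right i hi) hε'
      exact ⟨k, c, H, hk, hchain.start, fun _ => hchain⟩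
    · exact ⟨1, fun _ => z i, fun _ => ∅, one_pos, rfl, fun h => absurd h hi⟩
  choose k c H hk hc0 hc using hpieces
  set m := (Finset.range n).sup k + 1
  have hm : 0 < m := Nat.succ_pos _
  have hpad : ∀ i < n, IsLinkChain (L i) ε' (z i) (z (i + 1)) m
      (fun j => c i (min j (k i))) (fun j => H i (min j (k i - 1))) := fun i hi =>
    (hc i hi).pad (hk i) ((Finset.le_sup (Finset.mem_range.2 hi)).trans (Nat.le_succ _))
  refine ⟨m, hm, fun t => c (t / m) (min (t % m) (k (t / m))),
    fun t => H (t / m) (min (t % m) (k (t / m) - 1)), ?_, fun t ht => ?_⟩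
  · have hconcat := isLinkChain_concat hm (fun i _ => by simpa using hc0 i)
      fun i hi => (hpad i hi).mono (subset_closure.trans (h.link i hi).closure_subset)
    rwa [h.start, h.finish] at hconcat
  · exact ((hpad _ (Nat.div_lt_of_lt_mul (by rwa [mul_comm]))).link _
      (Nat.mod_lt t hm)).closure_subset

end Chains

section NestedChains

variable {Y : Type*} [MetricSpace Y] {V : Set Y} {a b : Y}

structure IsNestedChains (V : Set Y) (ε : ℕ → ℝ) (a b : Y) (n m : ℕ → ℕ) (z : ℕ → ℕ → Y)
    (L : ℕ → ℕ → Set Y) : Prop where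
  length_zero_pos : 0 < n 0
  factor_pos : ∀ k, 0 < m k
  length_succ : ∀ k, n (k + 1) = n k * m k
  chain : ∀ k, IsLinkChain V (ε k) a b (n k) (z k) (L k)
  closure_subset : ∀ k, ∀ t < n (k + 1), closure (L (k + 1) t) ⊆ L k (t / m k)

theorem exists_isNestedChains [LocallyConnectedSpace Y] (hV : IsOpen V) (hVc : IsPreconnected V)
    (ha : a ∈ V) (hb : b ∈ V) {ε : ℕ → ℝ} (hε : ∀ k, 0 < ε k) :
    ∃ n m z L, IsNestedChains V ε a b n m z L := by
  obtain ⟨n₀, z₀, L₀, hn₀, h₀⟩ := exists_isLinkChain hV hVc ha hb (hε 0)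
  have hstep : ∀ k (s : ℕ × (ℕ → Y) × (ℕ → Set Y)), IsLinkChain V (ε k) a b s.1 s.2.1 s.2.2 →
      ∃ m, 0 < m ∧ ∃ s' : ℕ × (ℕ → Y) × (ℕ → Set Y), s'.1 = s.1 * m ∧
        IsLinkChain V (ε (k + 1)) a b s'.1 s'.2.1 s'.2.2 ∧
        ∀ t < s'.1, closure (s'.2.2 t) ⊆ s.2.2 (t / m) := by
    intro k s hs
    obtain ⟨m, hm, z', L', hchain, hsub⟩ := hs.exists_refinement (hε (k + 1))
    exact ⟨m, hm, (s.1 * m, z', L'), rfl, hchain, hsub⟩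
  choose factor hfactor next hnext_len hnext_chain hnext_sub using hstep
  let seq (k : ℕ) : {s : ℕ × (ℕ → Y) × (ℕ → Set Y) // IsLinkChain V (ε k) a b s.1 s.2.1 s.2.2} :=
    Nat.rec ⟨(n₀, z₀, L₀), h₀⟩ (fun k s => ⟨next k s.1 s.2, hnext_chain k s.1 s.2⟩) k
  exact ⟨fun k => (seq k).1.1, fun k => factor k (seq k).1 (seq k).2, fun k => (seq k).1.2.1,
    fun k => (seq k).1.2.2, hn₀, fun k => hfactor _ _ _, fun k => hnext_len _ _ _,
    fun k => (seq k).2, fun k => hnext_sub _ _ _⟩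

namespace IsNestedChains

variable {ε : ℕ → ℝ} {n m : ℕ → ℕ} {z : ℕ → ℕ → Y} {L : ℕ → ℕ → Set Y}

theorem length_pos (h : IsNestedChains V ε a b n m z L) (k : ℕ) : 0 < n k := by
  induction k with
  | zero => exact h.length_zero_pos
  | succ k ih => rw [h.length_succ]; exact Nat.mul_pos ih (h.factor_pos k)

theorem link (h : IsNestedChains V ε a b n m z L) (k : ℕ) (u : ℝ) :
    IsSmallLink V (ε k) (L k (chainIndex (n k) u)) :=
  (h.chain k).link _ (chainIndex_lt (h.length_pos k) u)

theorem closure_link_succ_subset (h : IsNestedChains V ε a b n m z L) (k : ℕ) (u : ℝ) :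
    closure (L (k + 1) (chainIndex (n (k + 1)) u)) ⊆ L k (chainIndex (n k) u) := by
  have hidx : chainIndex (n (k + 1)) u / m k = chainIndex (n k) u := by
    rw [h.length_succ, chainIndex_mul_div _ (h.factor_pos k)]
  simpa only [hidx] using h.closure_subset k _ (chainIndex_lt (h.length_pos (k + 1)) u)

theorem link_antitone (h : IsNestedChains V ε a b n m z L) (u : ℝ) :
    Antitone fun k => L k (chainIndex (n k) u) :=
  antitone_nat_of_succ_le fun k => subset_closure.trans (h.closure_link_succ_subset k u)

theorem exists_forall_mem_link [CompleteSpace Y] (h : IsNestedChains V ε a b n m z L)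
    (hε : Tendsto ε atTop (𝓝 0)) (u : ℝ) :
    ∃ p, ∀ k, p ∈ L k (chainIndex (n k) u) := by
  set s := fun k => z k (chainIndex (n k) u)
  have hs (k : ℕ) : s k ∈ L k (chainIndex (n k) u) :=
    (h.chain k).mem_left _ (chainIndex_lt (h.length_pos k) u)
  have hcauchy : CauchySeq s := cauchySeq_of_le_tendsto_0 ε (fun k l N hk hl =>
    (h.link N u).dist_le _ (h.link_antitone u hk (hs k)) _ (h.link_antitone u hl (hs l))) hε
  obtain ⟨p, hp⟩ := cauchySeq_tendsto_of_complete hcauchy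
  exact ⟨p, fun k => h.closure_link_succ_subset k u (mem_closure_of_tendsto hp
    (eventually_atTop.2 ⟨k + 1, fun l hl => h.link_antitone u hl (hs l)⟩))⟩

theorem dist_le_of_mem_link (h : IsNestedChains V ε a b n m z L) {k : ℕ} {u v : ℝ}
    (huv : u ≤ v) (hvu : v ≤ u + 1 / n k) {p q : Y} (hp : p ∈ L k (chainIndex (n k) u))
    (hq : q ∈ L k (chainIndex (n k) v)) :
    dist p q ≤ 2 * ε k := by
  have hn := h.length_pos k
  obtain ⟨h1, h2⟩ := chainIndex_le_add_one hn huv hvu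
  have hε : 0 ≤ ε k := dist_self p ▸ (h.link k u).dist_le _ hp _ hp
  rcases h1.eq_or_lt with he | hlt
  · linarith [(h.link k u).dist_le _ hp _ (he ▸ hq)]
  set i := chainIndex (n k) u
  have he : chainIndex (n k) v = i + 1 := by omega
  have hi : i + 1 < n k := he ▸ chainIndex_lt hn v
  calc dist p q ≤ dist p (z k (i + 1)) + dist (z k (i + 1)) q := dist_triangle _ _ _
    _ ≤ ε k + ε k := add_le_add
        ((h.link k u).dist_le _ hp _ ((h.chain k).mem_right i (chainIndex_lt hn u)))
        (((h.chain k).link _ hi).dist_le _ ((h.chain k).mem_left _ hi) _ (he ▸ hq))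
    _ = 2 * ε k := by ring

theorem joinedIn [CompleteSpace Y] (h : IsNestedChains V ε a b n m z L)
    (hε : Tendsto ε atTop (𝓝 0)) : JoinedIn V a b := by
  choose f hf using h.exists_forall_mem_link hε
  have hf_eq (u : ℝ) (p : Y) (hp : ∀ k, p ∈ L k (chainIndex (n k) u)) : f u = p :=
    dist_le_zero.1 (ge_of_tendsto' hε fun k => (h.link k u).dist_le _ (hf u k) _ (hp k))
  have hf0 : f 0 = a := hf_eq 0 a fun k => by
    simpa [(h.chain k).start] using (h.chain k).mem_left 0 (h.length_pos k)
  have hf1 : f 1 = b := hf_eq 1 b fun k => by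
    have hn := h.length_pos k
    have := (h.chain k).mem_right (n k - 1) (by omega)
    rw [Nat.sub_add_cancel hn, (h.chain k).finish] at this
    simpa using this
  have hcont : Continuous f := Metric.continuous_iff.2 fun u δ hδ => by
    obtain ⟨k, hk⟩ : ∃ k, 2 * ε k < δ :=
      ((hε.const_mul 2).eventually (gt_mem_nhds (by simpa using hδ))).exists
    refine ⟨1 / n k, by have := h.length_pos k; positivity, fun v hv => ?_⟩
    rw [Real.dist_eq, abs_lt] at hv
    rcases le_total u v with huv | hvu
    · rw [dist_comm]
      exact (h.dist_le_of_mem_link huv (by linarith) (hf u k) (hf v k)).trans_lt hk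
    · exact (h.dist_le_of_mem_link hvu (by linarith) (hf v k) (hf u k)).trans_lt hk
  exact ⟨⟨⟨fun t => f t, hcont.comp continuous_subtype_val⟩, hf0, hf1⟩,
    fun t => (h.link 0 t).closure_subset (subset_closure (hf t 0))⟩

end IsNestedChains

theorem joinedIn_of_isOpen_of_isPreconnected [CompleteSpace Y] [LocallyConnectedSpace Y]
    (hV : IsOpen V) (hVc : IsPreconnected V) (ha : a ∈ V) (hb : b ∈ V) : JoinedIn V a b := by
  obtain ⟨n, m, z, L, h⟩ := exists_isNestedChains hV hVc ha hb (ε := fun k => 1 / (k + 1))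
    fun k => Nat.one_div_pos_of_nat
  exact h.joinedIn tendsto_one_div_add_atTop_nhds_zero_nat

theorem LocallyConnectedSpace.locallyPathConnectedSpace [CompleteSpace Y]
    [LocallyConnectedSpace Y] : LocallyPathConnectedSpace Y := by
  refine locallyPathConnectedSpace_iff_isOpen_pathComponentIn.2 fun x U hU => ?_
  by_cases hx : x ∈ U
  · convert hU.connectedComponentIn (x := x)
    refine ((isPathConnected_pathComponentIn hx).isConnected.isPreconnected
      |>.subset_connectedComponentIn (mem_pathComponentIn_self hx) pathComponentIn_subset)
      |>.antisymm fun w hw => ?_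
    exact (joinedIn_of_isOpen_of_isPreconnected hU.connectedComponentIn
      isPreconnected_connectedComponentIn (mem_connectedComponentIn hx) hw).mono
      (connectedComponentIn_subset _ _)
  · rw [not_nonempty_iff_eq_empty.mp (mt pathComponentIn_nonempty_iff.mp hx)]
    exact isOpen_empty

end NestedChains

section Separation

variable {X : Type*} [TopologicalSpace X]

theorem IsPreconnected.eq_of_coe_addCircle_eq_zero {S : Set X} (hS : IsPreconnected S)
    {h : X → ℝ} (hc : ContinuousOn h S) (hZ : ∀ z ∈ S, (h z : AddCircle (1 : ℝ)) = 0)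
    {x y : X} (hx : x ∈ S) (hy : y ∈ S) : h x = h y :=
  hS.constant_of_mapsTo Int.isClosedEmbedding_coe_real.isInducing.isDiscrete_range hc
    (fun z hz => by
      obtain ⟨k, hk⟩ := (AddCircle.coe_eq_zero_iff (1 : ℝ)).1 (hZ z hz)
      exact ⟨k, by simpa using hk⟩) hx hy

/-- Unicoherence. Were `∂U` split by closed sets `P` and `Q`, lift the map equal to `ρ mod 1` on
`U` and to `0` off `U` (with `ρ` a Urysohn function, `0` on `P` and `1` on `Q`) to `g : X → ℝ`:
then `g - ρ` is constant on `cl U` and `g` is constant on `Uᶜ`, although `ρ` jumps by `1`. -/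
theorem IsOpen.isPreconnected_frontier [NormalSpace X] [SimplyConnectedSpace X]
    [LocallyPathConnectedSpace X] {U : Set X} (hU : IsOpen U) (hUc : IsPreconnected U)
    (hUc' : IsPreconnected Uᶜ) : IsPreconnected (frontier U) := by
  classical
  rw [isPreconnected_closed_iff]
  rintro P Q hP hQ hPQ ⟨p, hpF, hpP⟩ ⟨q, hqF, hqQ⟩
  by_contra hdisj
  obtain ⟨ρ, hρP, hρQ, -⟩ := exists_continuous_zero_one_of_isClosed
    ((isClosed_frontier (s := U)).inter hP) ((isClosed_frontier (s := U)).inter hQ)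
    (Set.disjoint_left.2 fun z hzP hzQ => hdisj ⟨z, hzP.1, hzP.2, hzQ.2⟩)
  have hρF : ∀ z ∈ frontier U, (ρ z : AddCircle (1 : ℝ)) = 0 := by
    intro z hz
    rcases hPQ hz with h | h
    · simp [hρP ⟨hz, h⟩]
    · simp [hρQ ⟨hz, h⟩]
  let f : C(X, AddCircle (1 : ℝ)) :=
    ⟨fun z => if z ∈ U then (ρ z : AddCircle (1 : ℝ)) else 0,
      continuous_if (fun z hz => hρF z hz) (by fun_prop) continuousOn_const⟩
  have hnotU : ∀ z ∈ frontier U, z ∉ U := fun z hz => (hU.frontier_eq ▸ hz).2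
  obtain ⟨g, -, hg⟩ := ((AddCircle.isCoveringMap_coe (1 : ℝ)).existsUnique_continuousMap_lifts
    f p 0 (by simp [f, hnotU p hpF])).exists
  have hgf (z : X) : (g z : AddCircle (1 : ℝ)) = f z := congrFun hg z
  have h_in : g p - ρ p = g q - ρ q := by
    refine hUc.closure.eq_of_coe_addCircle_eq_zero (h := fun z => g z - ρ z)
      (g.continuous.sub ρ.continuous).continuousOn (fun z hz => ?_)
      (frontier_subset_closure hpF) (frontier_subset_closure hqF)
    by_cases hzU : z ∈ U
    · simp [hgf, f, hzU]
    · have hzF : z ∈ frontier U := hU.frontier_eq ▸ ⟨hz, hzU⟩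
      rw [AddCircle.coe_sub, hgf, hρF z hzF]
      simp [f, hzU]
  have h_out : g p = g q := hUc'.eq_of_coe_addCircle_eq_zero g.continuous.continuousOn
    (fun z hz => by simp [hgf, f, show z ∉ U from hz]) (hnotU p hpF) (hnotU q hqF)
  simp [hρP ⟨hpF, hpP⟩, hρQ ⟨hqF, hqQ⟩] at h_in
  linarith

theorem connectedComponentIn_compl_frontier_ne {U : Set X} (hU : IsOpen U) {x y : X}
    (hx : x ∉ closure U) (hy : y ∈ U) :
    connectedComponentIn (frontier U)ᶜ x ≠ connectedComponentIn (frontier U)ᶜ y := by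
  intro h
  have hsub : connectedComponentIn (frontier U)ᶜ y ⊆ U ∪ (closure U)ᶜ := fun z hz => by
    have := connectedComponentIn_subset _ _ hz
    rw [hU.frontier_eq] at this
    by_cases hzU : z ∈ U
    · exact Or.inl hzU
    · exact Or.inr fun hcl => this ⟨hcl, hzU⟩
  have hyF : y ∉ frontier U := fun hF => (hU.frontier_eq ▸ hF).2 hy
  have hxF : x ∉ frontier U := fun hF => hx (frontier_subset_closure hF)
  have hxU := isPreconnected_connectedComponentIn.subset_left_of_subset_union hU
    isClosed_closure.isOpen_compl (disjoint_compl_right.mono_left subset_closure) hsub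
    ⟨y, mem_connectedComponentIn hyF, hy⟩ (h ▸ mem_connectedComponentIn hxF)
  exact hx (subset_closure hxU)

end Separation

section Components

variable {X : Type*} [TopologicalSpace X] [LocallyConnectedSpace X] {F : Set X}

theorem mem_connectedComponentIn_of_mem_closure (hF : IsOpen F) {x z : X}
    (hz : z ∈ closure (connectedComponentIn F x)) (hzF : z ∈ F) :
    z ∈ connectedComponentIn F x := by
  obtain ⟨w, hwz, hwx⟩ := mem_closure_iff.mp hz _ hF.connectedComponentIn
    (mem_connectedComponentIn hzF)
  rw [connectedComponentIn_eq hwx, ← connectedComponentIn_eq hwz]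
  exact mem_connectedComponentIn hzF

theorem frontier_connectedComponentIn_subset (hF : IsOpen F) (x : X) :
    frontier (connectedComponentIn F x) ⊆ Fᶜ := fun z hz hzF => by
  rw [hF.connectedComponentIn.frontier_eq] at hz
  exact hz.2 (mem_connectedComponentIn_of_mem_closure hF hz.1 hzF)

theorem connectedComponentIn_eq_of_mem_closure (hF : IsOpen F) {A B : Set X} {x y p : X}
    (hA : IsPreconnected A) (hB : IsPreconnected B) (hAF : A ⊆ F) (hBF : B ⊆ F) (hx : x ∈ A)
    (hy : y ∈ B) (hpA : p ∈ closure A) (hpB : p ∈ closure B) (hpF : p ∈ F) :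
    connectedComponentIn F x = connectedComponentIn F y := by
  have hpx := mem_connectedComponentIn_of_mem_closure hF
    (closure_mono (hA.subset_connectedComponentIn hx hAF) hpA) hpF
  have hpy := mem_connectedComponentIn_of_mem_closure hF
    (closure_mono (hB.subset_connectedComponentIn hy hBF) hpB) hpF
  rw [connectedComponentIn_eq hpx, connectedComponentIn_eq hpy]

theorem isPreconnected_compl_connectedComponentIn_compl [PreconnectedSpace X]
    (hF : IsClosed F) (hFc : IsPreconnected F) (hFne : F.Nonempty) (y : X) :
    IsPreconnected (connectedComponentIn Fᶜ y)ᶜ := by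
  obtain ⟨x₀, hx₀⟩ := hFne
  have hFC : F ⊆ (connectedComponentIn Fᶜ y)ᶜ := fun z hz hzC =>
    connectedComponentIn_subset _ _ hzC hz
  refine isPreconnected_of_forall x₀ fun w hw => ?_
  by_cases hwF : w ∈ F
  · exact ⟨F, hFC, hx₀, hwF, hFc⟩
  set D := connectedComponentIn Fᶜ w
  have hDcl : closure D ⊆ (connectedComponentIn Fᶜ y)ᶜ := fun z hz hzC => by
    by_cases hzF : z ∈ F
    · exact hFC hzF hzC
    have hzD := mem_connectedComponentIn_of_mem_closure hF.isOpen_compl hz hzF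
    rw [connectedComponentIn_eq hzC, ← connectedComponentIn_eq hzD] at hw
    exact hw (mem_connectedComponentIn hwF)
  obtain ⟨p, hpD, hpF⟩ : (closure D ∩ F).Nonempty := by
    by_contra! hempty
    have hclosed : IsClosed D := closure_subset_iff_isClosed.mp fun z hz =>
      mem_connectedComponentIn_of_mem_closure hF.isOpen_compl hz
        fun hzF => hempty.subset ⟨hz, hzF⟩
    have hD := IsClopen.eq_univ ⟨hclosed, hF.isOpen_compl.connectedComponentIn⟩
      ⟨w, mem_connectedComponentIn hwF⟩
    exact connectedComponentIn_subset Fᶜ w (show x₀ ∈ D from hD ▸ mem_univ x₀) hx₀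
  exact ⟨F ∪ closure D, union_subset hFC hDcl, Or.inl hx₀,
    Or.inr (subset_closure (mem_connectedComponentIn hwF)),
    IsPreconnected.union p hpF hpD hFc isPreconnected_connectedComponentIn.closure⟩

end Components

theorem frontier_component_minimal_separator_general
    {Y : Type*} [MetricSpace Y] [CompactSpace Y]
    [LocallyConnectedSpace Y] [SimplyConnectedSpace Y]
    (K : Set Y) (hK : IsClosed K)
    (x y : Y) (hx : x ∈ Kᶜ) (hy : y ∈ Kᶜ)
    (hsep : connectedComponentIn Kᶜ x ≠ connectedComponentIn Kᶜ y)
    (Cx Cy : Set Y)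
    (hCx : Cx = connectedComponentIn Kᶜ x)
    (hCy : Cy = connectedComponentIn (closure Cx)ᶜ y) :
    IsConnected (frontier Cy) ∧
    (x ∈ (frontier Cy)ᶜ ∧ y ∈ (frontier Cy)ᶜ ∧
      connectedComponentIn (frontier Cy)ᶜ x ≠ connectedComponentIn (frontier Cy)ᶜ y) ∧
    (∀ L : Set Y, IsClosed L → L ⊂ frontier Cy →
      x ∈ Lᶜ ∧ y ∈ Lᶜ ∧ connectedComponentIn Lᶜ x = connectedComponentIn Lᶜ y) := by
  have hCxo : IsOpen Cx := hCx ▸ hK.isOpen_compl.connectedComponentIn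
  have hCxc : IsPreconnected Cx := hCx ▸ isPreconnected_connectedComponentIn
  have hxCx : x ∈ Cx := hCx ▸ mem_connectedComponentIn hx
  have hyCx : y ∉ closure Cx := fun h => hsep (connectedComponentIn_eq
    (mem_connectedComponentIn_of_mem_closure hK.isOpen_compl (hCx ▸ h) hy))
  have hCyo : IsOpen Cy := hCy ▸ isClosed_closure.isOpen_compl.connectedComponentIn
  have hCyc : IsPreconnected Cy := hCy ▸ isPreconnected_connectedComponentIn
  have hyCy : y ∈ Cy := hCy ▸ mem_connectedComponentIn hyCx
  have hCxCy : Disjoint Cx (closure Cy) := Disjoint.closure_right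
    (disjoint_compl_right.mono_right (hCy ▸ (connectedComponentIn_subset _ _).trans
      (compl_subset_compl.2 subset_closure))) hCxo
  have hFCx : frontier Cy ⊆ closure Cx := by
    simpa only [hCy, compl_compl] using
      frontier_connectedComponentIn_subset isClosed_closure.isOpen_compl (x := y)
  have hxF : x ∉ closure Cy := hCxCy.notMem_of_mem_left hxCx
  have hconn : IsConnected (frontier Cy) := by
    have := LocallyConnectedSpace.locallyPathConnectedSpace (Y := Y)
    refine ⟨nonempty_frontier_iff.2 ⟨⟨y, hyCy⟩, fun h => hxF (subset_closure (h ▸ mem_univ x))⟩,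
      hCyo.isPreconnected_frontier hCyc (hCy ▸ ?_)⟩
    exact isPreconnected_compl_connectedComponentIn_compl isClosed_closure hCxc.closure
      ⟨x, subset_closure hxCx⟩ y
  refine ⟨hconn, ⟨fun h => hxF (frontier_subset_closure h), fun h => (hCyo.frontier_eq ▸ h).2 hyCy,
    connectedComponentIn_compl_frontier_ne hCyo hxF hyCy⟩, fun L hL hLF => ?_⟩
  obtain ⟨p, hpF, hpL⟩ := exists_of_ssubset hLF
  have hCxL : Cx ⊆ Lᶜ := fun z hz hzL =>
    hCxCy.notMem_of_mem_left hz (frontier_subset_closure (hLF.subset hzL))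
  have hCyL : Cy ⊆ Lᶜ := fun z hz hzL => (hCyo.frontier_eq ▸ hLF.subset hzL).2 hz
  exact ⟨hCxL hxCx, hCyL hyCy, connectedComponentIn_eq_of_mem_closure hL.isOpen_compl hCxc hCyc
    hCxL hCyL hxCx hyCy (hFCx hpF) (frontier_subset_closure hpF) hpL⟩

/-- Let `Y` be a locally connected, simply connected metric continuum, `K ⊆ Y` closed,
and let `x, y ∉ K` lie in different connected components of `Y ∖ K`. Let `Cx` be the
component of `Y ∖ K` containing `x` and `Cy` the component of `Y ∖ cl(Cx)` containing
`y`. Then `∂Cy` is connected, separates `x` from `y`, and no proper closed subset of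
`∂Cy` separates `x` from `y`. -/
theorem frontier_component_minimal_separator
    {Y : Type*} [MetricSpace Y] [CompactSpace Y] [ConnectedSpace Y]
    [LocallyConnectedSpace Y] [SimplyConnectedSpace Y]
    (K : Set Y) (hK : IsClosed K)
    (x y : Y) (hx : x ∈ Kᶜ) (hy : y ∈ Kᶜ)
    (hsep : connectedComponentIn Kᶜ x ≠ connectedComponentIn Kᶜ y)
    (Cx Cy : Set Y)
    (hCx : Cx = connectedComponentIn Kᶜ x)
    (hCy : Cy = connectedComponentIn (closure Cx)ᶜ y) :
    IsConnected (frontier Cy) ∧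
    (x ∈ (frontier Cy)ᶜ ∧ y ∈ (frontier Cy)ᶜ ∧
      connectedComponentIn (frontier Cy)ᶜ x ≠ connectedComponentIn (frontier Cy)ᶜ y) ∧
    (∀ L : Set Y, IsClosed L → L ⊂ frontier Cy →
      x ∈ Lᶜ ∧ y ∈ Lᶜ ∧ connectedComponentIn Lᶜ x = connectedComponentIn Lᶜ y) :=
  frontier_component_minimal_separator_general K hK x y hx hy hsep Cx Cy hCx hCy
end
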